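/- Let f : ℝⁿ → ℝⁿ and μ ≥ 0. Suppose that: (i) f is continuous on ℝⁿ; (ii) for every x ∈ ℝⁿ there exist η_x ≥ 0 and a strict η_x-estimator g_x of f at x with inj(g_x, x) > η_x; (iii) for every x ∈ ℝⁿ f admits a strict μ-estimator h_x at x, and σ := inf over x ∈ ℝⁿ of lop(h_x, x) satisfies σ > μ. Then f is a bijection of ℝⁿ onto ℝⁿ, and f⁻¹ is Lipschitz continuous on ℝⁿ with constant (σ − μ)⁻¹. -/

import Mathlib

open Metric Set
open scoped ENNReal NNReal

noncomputable section

variable {E F : Type*} [NormedAddCommGroup E] [NormedAddCommGroup F]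

/-- `f` is `α`-covering at `x`: for every `ε > 0` there is `r ∈ (0, ε]` with
`B̄(f x, α r) ⊆ f (B̄(x, r))`. -/
def AlphaCoveringAt (f : E → F) (x : E) (α : ℝ) : Prop :=
  ∀ ε > (0:ℝ), ∃ r : ℝ, 0 < r ∧ r ≤ ε ∧
    closedBall (f x) (α * r) ⊆ f '' closedBall x r

/-- The covering bound `cov(f, x)`: supremum of all `α > 0` for which `f` is
`α`-covering at `x`. -/
def covBound (f : E → F) (x : E) : ℝ≥0∞ :=
  ⨆ (α : ℝ≥0) (_ : 0 < α ∧ AlphaCoveringAt f x (α : ℝ)), (α : ℝ≥0∞)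

/-- `f` is linearly open around `xb` with constant `α`. -/
def LinOpenWith (f : E → F) (xb : E) (α : ℝ) : Prop :=
  ∃ U ∈ nhds xb, ∃ V ∈ nhds (f xb), ∀ x ∈ U, ∀ r > (0:ℝ),
    ball (f x) (α * r) ∩ V ⊆ f '' ball x r

/-- The exact linear openness bound `lop(f, xb)` (`0` if no constant works). -/
def lopBound (f : E → F) (xb : E) : ℝ≥0∞ :=
  ⨆ (α : ℝ≥0) (_ : 0 < α ∧ LinOpenWith f xb (α : ℝ)), (α : ℝ≥0∞)

/-- `ℓ` is a Lipschitz constant of `h` on some neighbourhood of `xb`. -/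
def IsLipConstAround (h : E → F) (xb : E) (ℓ : ℝ) : Prop :=
  ∃ U ∈ nhds xb, ∀ x₁ ∈ U, ∀ x₂ ∈ U, ‖h x₁ - h x₂‖ ≤ ℓ * ‖x₁ - x₂‖

/-- `lip(h, xb)`: infimum of all `ℓ > 0` which are Lipschitz constants of `h`
on some neighbourhood of `xb` (`∞` if `h` is not locally Lipschitz at `xb`). -/
def lipBound (h : E → F) (xb : E) : ℝ≥0∞ :=
  ⨅ (ℓ : ℝ≥0) (_ : 0 < ℓ ∧ IsLipConstAround h xb (ℓ : ℝ)), (ℓ : ℝ≥0∞)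

/-- `β` is a metric injectivity constant for `g` on some closed ball around `xb`. -/
def IsInjConstAround (g : E → F) (xb : E) (β : ℝ) : Prop :=
  ∃ δ > (0:ℝ), ∀ x₁ ∈ closedBall xb δ, ∀ x₂ ∈ closedBall xb δ,
    β * ‖x₁ - x₂‖ ≤ ‖g x₁ - g x₂‖

/-- `g` is metrically injective around `xb`. -/
def MetricallyInjectiveAround (g : E → F) (xb : E) : Prop :=
  ∃ β > (0:ℝ), IsInjConstAround g xb β

/-- The metric injection bound `inj(g, xb)`: supremum of all valid `β > 0`. -/
def injBound (g : E → F) (xb : E) : ℝ≥0∞ :=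
  ⨆ (β : ℝ≥0) (_ : 0 < β ∧ IsInjConstAround g xb (β : ℝ)), (β : ℝ≥0∞)

/-- `h` is a strict `μ`-estimator of `f` at `xb`: `h xb = f xb` and
`lip(f - h, xb) ≤ μ`. -/
def IsStrictEstimator (f h : E → F) (xb : E) (μ : ℝ≥0) : Prop :=
  h xb = f xb ∧ lipBound (fun x => f x - h x) xb ≤ (μ : ℝ≥0∞)

/-- `g` is strongly (metrically) regular around `xb`: it is linearly open around
`xb` and the set-valued inverse `g⁻¹` has a single-valued graphical localization
around `(g xb, xb)`. -/
def StronglyRegularAround (g : E → F) (xb : E) : Prop :=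
  (∃ α > (0:ℝ), LinOpenWith g xb α) ∧
  ∃ V ∈ nhds (g xb), ∃ U ∈ nhds xb, ∀ y ∈ V, ∃ x : E, g ⁻¹' {y} ∩ U = {x}


open Topology

/-!
By the Lyusternik–Graves perturbation argument, `f` inherits from the estimators `h x` linear
openness at any rate `c < σ - μ`, and the estimators `g_x` make it locally injective; together
these make `f` a local homeomorphism that covers `B(f z, c ε)` by `B(z, ε)` and expands distances
by the factor `c` on small balls. On a compact set the radii can be chosen uniformly, so every
segment `[f x₀, y]` lifts, step by step, to a path from `x₀` that is `(1/c)`-Lipschitz. This gives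
surjectivity and `c ‖x - x₀‖ ≤ ‖y - f x₀‖` for the endpoint `x`; injectivity follows from the
homotopy lifting property of local homeomorphisms, and then `f⁻¹` is `(1/c)`-Lipschitz for every
`c < σ - μ`.
-/

theorem exists_linOpenWith_of_lt_lopBound {f : E → F} {xb : E} {b : ℝ≥0∞}
    (h : b < lopBound f xb) : ∃ α : ℝ≥0, b < α ∧ LinOpenWith f xb α := by
  simp only [lopBound, lt_iSup_iff] at h
  obtain ⟨α, ⟨-, hα⟩, hbα⟩ := h
  exact ⟨α, hbα, hα⟩

theorem exists_isLipConstAround_of_lipBound_lt {h : E → F} {xb : E} {b : ℝ≥0∞}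
    (hb : lipBound h xb < b) : ∃ ℓ : ℝ≥0, (ℓ : ℝ≥0∞) < b ∧ IsLipConstAround h xb ℓ := by
  simp only [lipBound, iInf_lt_iff] at hb
  obtain ⟨ℓ, ⟨-, hℓ⟩, hℓb⟩ := hb
  exact ⟨ℓ, hℓb, hℓ⟩

theorem exists_isInjConstAround_of_lt_injBound {g : E → F} {xb : E} {b : ℝ≥0∞}
    (h : b < injBound g xb) : ∃ β : ℝ≥0, b < β ∧ IsInjConstAround g xb β := by
  simp only [injBound, lt_iSup_iff] at h
  obtain ⟨β, ⟨-, hβ⟩, hbβ⟩ := h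
  exact ⟨β, hbβ, hβ⟩

theorem IsInjConstAround.of_isLipConstAround_sub {f g : E → F} {xb : E} {β ℓ : ℝ}
    (hg : IsInjConstAround g xb β) (hfg : IsLipConstAround (fun x => f x - g x) xb ℓ) :
    IsInjConstAround f xb (β - ℓ) := by
  obtain ⟨δ, hδ, hgδ⟩ := hg
  obtain ⟨U, hU, hfgU⟩ := hfg
  obtain ⟨r, hr, hrU⟩ := Metric.mem_nhds_iff.mp hU
  have hsub : closedBall xb (min δ (r / 2)) ⊆ closedBall xb δ ∩ U := fun x hx =>
    ⟨closedBall_subset_closedBall (min_le_left _ _) hx,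
      hrU (closedBall_subset_ball (by linarith [min_le_right δ (r / 2)]) hx)⟩
  refine ⟨min δ (r / 2), lt_min hδ (half_pos hr), fun x₁ h₁ x₂ h₂ => ?_⟩
  have hg₁₂ := hgδ x₁ (hsub h₁).1 x₂ (hsub h₂).1
  have hfg₁₂ := hfgU x₁ (hsub h₁).2 x₂ (hsub h₂).2
  have htri : ‖g x₁ - g x₂‖ ≤ ‖f x₁ - f x₂‖ + ‖(f x₁ - g x₁) - (f x₂ - g x₂)‖ := by
    calc ‖g x₁ - g x₂‖ = ‖(f x₁ - f x₂) - ((f x₁ - g x₁) - (f x₂ - g x₂))‖ := by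
          congr 1; abel
      _ ≤ _ := norm_sub_le _ _
  linarith

theorem IsInjConstAround.exists_injOn {g : E → F} {xb : E} {β : ℝ} (hβ : 0 < β)
    (hg : IsInjConstAround g xb β) : ∃ U ∈ 𝓝 xb, InjOn g U := by
  obtain ⟨δ, hδ, hgδ⟩ := hg
  refine ⟨closedBall xb δ, closedBall_mem_nhds xb hδ, fun x₁ h₁ x₂ h₂ he => ?_⟩
  have := hgδ x₁ h₁ x₂ h₂
  rw [he, sub_self, norm_zero] at this
  exact sub_eq_zero.mp (norm_le_zero_iff.mp (nonpos_of_mul_nonpos_right this hβ))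

theorem exists_injOn_of_lipBound_sub_lt_injBound {f g : E → F} {xb : E}
    (h : lipBound (fun x => f x - g x) xb < injBound g xb) : ∃ U ∈ 𝓝 xb, InjOn f U := by
  obtain ⟨β, hβ, hgβ⟩ := exists_isInjConstAround_of_lt_injBound h
  obtain ⟨ℓ, hℓβ, hfgℓ⟩ := exists_isLipConstAround_of_lipBound_lt hβ
  exact (hgβ.of_isLipConstAround_sub hfgℓ).exists_injOn (sub_pos.mpr (by exact_mod_cast hℓβ))

/-- The residual `dist (f u) y` shrinks geometrically along the steps while the path length stays
bounded by `K * dist (f x) y / (1 - q)`, which is what keeps the iterates inside `ball x r`. -/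
theorem exists_mem_ball_eq_of_forall_step {X Y : Type*} [PseudoMetricSpace X] [CompleteSpace X]
    [MetricSpace Y] {f : X → Y} (hf : Continuous f) {x : X} {y : Y} {r K q : ℝ}
    (hK : 0 ≤ K) (hq₀ : 0 ≤ q) (hq : q < 1) (hr : K * dist (f x) y < (1 - q) * r)
    (hstep : ∀ u ∈ ball x r, ∃ u', dist u' u ≤ K * dist (f u) y ∧
      dist (f u') y ≤ q * dist (f u) y) :
    ∃ x' ∈ ball x r, f x' = y := by
  choose! next hnext using hstep
  set u : ℕ → X := fun k => next^[k] x
  have hu : ∀ k, u (k + 1) = next (u k) := fun k => Function.iterate_succ_apply' _ _ _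
  set d₀ := dist (f x) y
  have mem_of_le : ∀ v, (1 - q) * dist v x + K * dist (f v) y ≤ K * d₀ → v ∈ ball x r := by
    intro v hv
    have := mul_nonneg hK (dist_nonneg (x := f v) (y := y))
    exact mem_ball.mpr (lt_of_mul_lt_mul_left (by linarith) (sub_nonneg.mpr hq.le))
  have inv : ∀ k, (1 - q) * dist (u k) x + K * dist (f (u k)) y ≤ K * d₀ ∧
      dist (f (u k)) y ≤ q ^ k * d₀ := by
    intro k
    induction k with
    | zero => simp [u, d₀]
    | succ k ih =>
      obtain ⟨hdist, hres⟩ := hnext (u k) (mem_of_le _ ih.1)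
      rw [hu]
      have htri : (1 - q) * dist (next (u k)) x ≤ (1 - q) * (dist (u k) x + K * dist (f (u k)) y) :=
        mul_le_mul_of_nonneg_left ((dist_triangle _ (u k) _).trans (by linarith))
          (sub_nonneg.mpr hq.le)
      constructor
      · nlinarith [mul_le_mul_of_nonneg_left hres hK]
      · calc dist (f (next (u k))) y ≤ q * dist (f (u k)) y := hres
          _ ≤ q * (q ^ k * d₀) := mul_le_mul_of_nonneg_left ih.2 hq₀
          _ = q ^ (k + 1) * d₀ := by ring
  have hcauchy : CauchySeq u := by
    refine cauchySeq_of_le_geometric q (K * d₀) hq fun k => ?_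
    rw [dist_comm, hu]
    calc dist (next (u k)) (u k) ≤ K * dist (f (u k)) y := (hnext (u k) (mem_of_le _ (inv k).1)).1
      _ ≤ K * (q ^ k * d₀) := mul_le_mul_of_nonneg_left (inv k).2 hK
      _ = K * d₀ * q ^ k := by ring
  obtain ⟨x', hx'⟩ := cauchySeq_tendsto_of_complete hcauchy
  refine ⟨x', ?_, ?_⟩
  · have hlim : (1 - q) * dist x' x ≤ K * d₀ :=
      le_of_tendsto ((hx'.dist tendsto_const_nhds).const_mul _) (Filter.Eventually.of_forall
        fun k => by linarith [(inv k).1, mul_nonneg hK (dist_nonneg (x := f (u k)) (y := y))])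
    exact mem_ball.mpr (lt_of_mul_lt_mul_left (by linarith) (sub_nonneg.mpr hq.le))
  · refine tendsto_nhds_unique ((hf.tendsto x').comp hx') ?_
    refine tendsto_iff_dist_tendsto_zero.mpr
      (squeeze_zero (fun _ => dist_nonneg) (fun k => (inv k).2) ?_)
    simpa using (tendsto_pow_atTop_nhds_zero_of_lt_one hq₀ hq).mul_const d₀

/-- One Graves step: solve `h u' = h u + (y - f u)` with `u'` close to `u` by linear openness of
`h`; then `y - f u'` is an increment of `f - h`, so it is small by the Lipschitz bound. -/
theorem exists_step_of_linOpen {f h : E → F} {u : E} {y : F} {V : Set F} {α α' m : ℝ}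
    (hα' : 0 < α') (hα : α' < α) (hm : 0 ≤ m)
    (hop : ∀ r > 0, ball (h u) (α * r) ∩ V ⊆ h '' ball u r) (hV : h u + (y - f u) ∈ V)
    (hlip : ∀ u' ∈ ball u (α'⁻¹ * dist (f u) y),
      ‖(f u' - h u') - (f u - h u)‖ ≤ m * ‖u' - u‖) :
    ∃ u', dist u' u ≤ α'⁻¹ * dist (f u) y ∧ dist (f u') y ≤ m / α' * dist (f u) y := by
  rcases eq_or_lt_of_le (dist_nonneg (x := f u) (y := y)) with hd | hd
  · exact ⟨u, by simp [← hd], by simp [← hd]⟩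
  set s := α'⁻¹ * dist (f u) y
  have hs : 0 < s := mul_pos (inv_pos.mpr hα') hd
  have htarget : h u + (y - f u) ∈ ball (h u) (α * s) := by
    rw [mem_ball, dist_eq_norm, add_sub_cancel_left, ← dist_eq_norm, dist_comm]
    calc dist (f u) y = α' * s := by simp only [s]; field_simp
      _ < α * s := mul_lt_mul_of_pos_right hα hs
  obtain ⟨u', hu', hhu'⟩ := hop s hs ⟨htarget, hV⟩
  refine ⟨u', (mem_ball.mp hu').le, ?_⟩
  calc dist (f u') y = ‖(f u' - h u') - (f u - h u)‖ := by
        rw [dist_eq_norm, hhu']; congr 1; abel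
    _ ≤ m * ‖u' - u‖ := hlip u' hu'
    _ ≤ m * s := mul_le_mul_of_nonneg_left (by rw [← dist_eq_norm]; exact (mem_ball.mp hu').le) hm
    _ = m / α' * dist (f u) y := by ring

def CoversNear (f : E → F) (c : ℝ) (xb : E) : Prop :=
  ∃ ρ > 0, ∀ z ∈ ball xb ρ, ∀ ε ∈ Ioc 0 ρ, ball (f z) (c * ε) ⊆ f '' ball z ε

theorem IsLipConstAround.continuousAt {g : E → F} {xb : E} {ℓ : ℝ}
    (hg : IsLipConstAround g xb ℓ) : ContinuousAt g xb := by
  obtain ⟨U, hU, hgU⟩ := hg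
  refine ((LipschitzOnWith.of_dist_le_mul (K := ℓ.toNNReal) fun x₁ h₁ x₂ h₂ => ?_).continuousOn
    ).continuousAt hU
  rw [dist_eq_norm, dist_eq_norm]
  exact (hgU x₁ h₁ x₂ h₂).trans
    (mul_le_mul_of_nonneg_right (Real.le_coe_toNNReal ℓ) (norm_nonneg _))

theorem LinOpenWith.eventually_exists_step {f h : E → F} {xb : E} {α m c : ℝ}
    (hf : Continuous f) (hh : LinOpenWith h xb α)
    (hfh : IsLipConstAround (fun x => f x - h x) xb m) (hm : 0 ≤ m) (hc : 0 < c)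
    (hcm : c + m < α) :
    ∀ᶠ p : E × F in 𝓝 (xb, f xb), ∃ u', dist u' p.1 ≤ (c + m)⁻¹ * dist (f p.1) p.2 ∧
      dist (f u') p.2 ≤ m / (c + m) * dist (f p.1) p.2 := by
  obtain ⟨Uh, hUh, V, hV, hop⟩ := hh
  obtain ⟨Ue, hUe, hlip⟩ := id hfh
  obtain ⟨R, hR, hRU⟩ := Metric.mem_nhds_iff.mp hUe
  have htarget : ContinuousAt (fun p : E × F => p.2 - (f p.1 - h p.1)) (xb, f xb) :=
    continuousAt_snd.sub (ContinuousAt.comp (g := fun x => f x - h x) hfh.continuousAt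
      continuousAt_fst)
  have hreach : ContinuousAt (fun p : E × F => dist p.1 xb + (c + m)⁻¹ * dist (f p.1) p.2)
      (xb, f xb) := by fun_prop
  filter_upwards [continuousAt_fst.eventually_mem hUh,
    htarget.eventually_mem (by rwa [sub_sub_cancel]),
    hreach.eventually (gt_mem_nhds (by simpa using hR))] with ⟨u, y⟩ hu hyu hreach_u
  have hα' : 0 < c + m := by linarith
  have huUe : u ∈ Ue := hRU (mem_ball.mpr (by
    linarith [mul_nonneg (inv_nonneg.mpr hα'.le) (dist_nonneg (x := f u) (y := y))]))
  refine exists_step_of_linOpen hα' hcm hm (hop u hu) (by convert hyu using 1; abel)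
    fun u' hu' => hlip u' (hRU (mem_ball.mpr ?_)) u huUe
  linarith [dist_triangle u' u xb, mem_ball.mp hu']

/-- The Lyusternik–Graves theorem. -/
theorem LinOpenWith.coversNear_of_isLipConstAround_sub [CompleteSpace E] {f h : E → F} {xb : E}
    {α m c : ℝ} (hf : Continuous f) (hh : LinOpenWith h xb α)
    (hfh : IsLipConstAround (fun x => f x - h x) xb m) (hm : 0 ≤ m) (hc : 0 < c)
    (hcm : c + m < α) : CoversNear f c xb := by
  obtain ⟨r, hr, hstep⟩ :=
    Metric.eventually_nhds_iff.mp (hh.eventually_exists_step hf hfh hm hc hcm)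
  obtain ⟨δ, hδ, hfδ⟩ := Metric.continuousAt_iff.mp hf.continuousAt (r / 2) (half_pos hr)
  set ρ := min (min (r / 4) δ) (r / (2 * c))
  refine ⟨ρ, by positivity, fun z hz ε hε y hy => ?_⟩
  have hρr : ρ ≤ r / 4 := (min_le_left _ _).trans (min_le_left _ _)
  have hρδ : ρ ≤ δ := (min_le_left _ _).trans (min_le_right _ _)
  have hcε : c * ε ≤ r / 2 := by
    have : ε ≤ r / (2 * c) := hε.2.trans (min_le_right _ _)
    rw [le_div_iff₀ (by positivity)] at this
    linarith
  have hzxb : dist z xb < ρ := hz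
  have hα' : 0 < c + m := by linarith
  refine exists_mem_ball_eq_of_forall_step (K := (c + m)⁻¹) hf (by positivity) (by positivity)
    ((div_lt_one hα').mpr (by linarith)) ?_ fun u hu => @hstep (u, y) ?_
  · rw [show 1 - m / (c + m) = (c + m)⁻¹ * c by field_simp; ring, mul_assoc]
    exact mul_lt_mul_of_pos_left (by rw [dist_comm]; exact hy) (by positivity)
  · rw [Prod.dist_eq, max_lt_iff]
    constructor
    · linarith [dist_triangle u z xb, mem_ball.mp hu, hε.2]
    · linarith [dist_triangle y (f z) (f xb), mem_ball.mp hy, hfδ (hzxb.trans_le hρδ)]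

theorem coversNear_of_lipBound_sub_add_lt_lopBound [CompleteSpace E] {f h : E → F} {xb : E}
    {c : ℝ≥0} (hf : Continuous f) (hc : 0 < c)
    (hlt : lipBound (fun x => f x - h x) xb + c < lopBound h xb) : CoversNear f c xb := by
  obtain ⟨α, hα, hhα⟩ := exists_linOpenWith_of_lt_lopBound hlt
  obtain ⟨m, hm, hfhm⟩ := exists_isLipConstAround_of_lipBound_lt (lt_tsub_iff_right.mpr hα)
  have hcm : (c : ℝ≥0∞) + m < α := by rw [add_comm]; exact lt_tsub_iff_right.mp hm
  exact hhα.coversNear_of_isLipConstAround_sub hf hfhm m.coe_nonneg hc (by exact_mod_cast hcm)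

/-- If `‖f x₁ - f x₂‖ < c r` with `r = ‖x₁ - x₂‖`, covering yields `x' ∈ B(x₁, r)` with
`f x' = f x₂`, and injectivity forces the absurd `x' = x₂`. -/
theorem CoversNear.isInjConstAround {f : E → F} {c : ℝ} {xb : E} (hf : CoversNear f c xb)
    {U : Set E} (hU : U ∈ 𝓝 xb) (hinj : InjOn f U) : IsInjConstAround f xb c := by
  obtain ⟨ρ, hρ, hcov⟩ := hf
  obtain ⟨R, hR, hRU⟩ := Metric.mem_nhds_iff.mp hU
  refine ⟨min (ρ / 2) (R / 3), by positivity, fun x₁ h₁ x₂ h₂ => ?_⟩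
  have hδρ : min (ρ / 2) (R / 3) ≤ ρ / 2 := min_le_left _ _
  have hδR : min (ρ / 2) (R / 3) ≤ R / 3 := min_le_right _ _
  rw [mem_closedBall] at h₁ h₂
  rw [← dist_eq_norm, ← dist_eq_norm]
  by_contra! hlt
  have hr : 0 < dist x₁ x₂ := dist_nonneg.lt_of_ne fun h => by
    rw [← h, mul_zero] at hlt; exact hlt.not_ge dist_nonneg
  obtain ⟨x', hx', hfx'⟩ := hcov x₁ (mem_ball.mpr (by linarith)) (dist x₁ x₂)
    ⟨hr, by linarith [dist_triangle_right x₁ x₂ xb]⟩ (mem_ball'.mpr hlt)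
  have hx'U : x' ∈ U := by
    refine hRU (mem_ball.mpr ?_)
    linarith [dist_triangle x' x₁ xb, mem_ball.mp hx', dist_triangle_right x₁ x₂ xb]
  have hx₂U : x₂ ∈ U := hRU (mem_ball.mpr (by linarith))
  rw [hinj hx'U hx₂U hfx', mem_ball, dist_comm] at hx'
  exact lt_irrefl _ hx'

def CoversAndExpandsOnBall (f : E → F) (c : ℝ) (z : E) (ε : ℝ) : Prop :=
  ball (f z) (c * ε) ⊆ f '' ball z ε ∧
    ∀ x₁ ∈ ball z ε, ∀ x₂ ∈ ball z ε, c * dist x₁ x₂ ≤ dist (f x₁) (f x₂)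

theorem IsCompact.exists_forall_coversAndExpandsOnBall {K : Set E} (hK : IsCompact K)
    {f : E → F} {c : ℝ} (hcov : ∀ xb, CoversNear f c xb) (hexp : ∀ xb, IsInjConstAround f xb c) :
    ∃ ε > 0, ∀ z ∈ K, CoversAndExpandsOnBall f c z ε := by
  have hloc : ∀ xb ∈ K, ∀ᶠ p : ℝ × E in 𝓝 (0, xb), 0 < p.1 →
      CoversAndExpandsOnBall f c p.2 p.1 := by
    intro xb _
    obtain ⟨ρ, hρ, hcovρ⟩ := hcov xb
    obtain ⟨δ, hδ, hexpδ⟩ := hexp xb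
    have hr : 0 < min ρ (δ / 2) := by positivity
    filter_upwards [prod_mem_nhds (Iio_mem_nhds hr) (ball_mem_nhds xb hr)]
      with ⟨ε, z⟩ ⟨hε, hz⟩ hε₀
    have hεr : ε < min ρ (δ / 2) := hε
    have hzr : dist z xb < min ρ (δ / 2) := hz
    have hmem : ∀ x ∈ ball z ε, x ∈ closedBall xb δ := fun x hx => mem_closedBall.mpr <| by
      linarith [dist_triangle x z xb, mem_ball.mp hx, min_le_right ρ (δ / 2)]
    refine ⟨hcovρ z (ball_subset_ball (min_le_left _ _) hz) ε
      ⟨hε₀, hεr.le.trans (min_le_left _ _)⟩, fun x₁ h₁ x₂ h₂ => ?_⟩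
    simpa only [dist_eq_norm] using hexpδ x₁ (hmem x₁ h₁) x₂ (hmem x₂ h₂)
  obtain ⟨r, hr, hall⟩ :=
    Metric.eventually_nhds_iff.mp <| hK.eventually_forall_of_forall_eventually
      (P := fun ε z => 0 < ε → CoversAndExpandsOnBall f c z ε) hloc
  refine ⟨r / 2, half_pos hr, fun z hz => hall ?_ z hz (half_pos hr)⟩
  rw [Real.dist_eq, sub_zero, abs_of_pos (half_pos hr)]
  exact half_lt_self hr

theorem isLocalHomeomorph_of_coversNear {f : E → F} {c : ℝ} (hf : Continuous f) (hc : 0 < c)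
    (hcov : ∀ xb, CoversNear f c xb) (hexp : ∀ xb, IsInjConstAround f xb c) :
    IsLocalHomeomorph f := by
  have hopen : IsOpenMap f := IsOpenMap.of_nhds_le fun x => Filter.le_map fun s hs => by
    obtain ⟨ρ, hρ, hcovρ⟩ := hcov x
    obtain ⟨r, hr, hrs⟩ := Metric.mem_nhds_iff.mp hs
    have hε : min ρ r ∈ Ioc 0 ρ := ⟨lt_min hρ hr, min_le_left _ _⟩
    exact Filter.mem_of_superset (ball_mem_nhds _ (mul_pos hc hε.1))
      ((hcovρ x (mem_ball_self hρ) _ hε).trans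
        (image_mono ((ball_subset_ball (min_le_right _ _)).trans hrs)))
  refine isLocalHomeomorph_iff_isOpenEmbedding_restrict.mpr fun x => ?_
  obtain ⟨U, hU, hinj⟩ := (hexp x).exists_injOn hc
  obtain ⟨V, hVU, hVo, hxV⟩ := _root_.mem_nhds_iff.mp hU
  exact ⟨V, hVo.mem_nhds hxV, .of_continuous_injective_isOpenMap
    (hf.comp continuous_subtype_val) (hinj.mono hVU).injective (hopen.domRestrict hVo)⟩

theorem LipschitzOnWith.Icc_union {X : Type*} [PseudoMetricSpace X] {g : ℝ → X} {K : ℝ≥0}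
    {a b d : ℝ} (h₁ : LipschitzOnWith K g (Icc a b)) (h₂ : LipschitzOnWith K g (Icc b d)) :
    LipschitzOnWith K g (Icc a d) := by
  refine LipschitzOnWith.of_dist_le_mul fun s hs t ht => ?_
  wlog hst : s ≤ t generalizing s t
  · rw [dist_comm, dist_comm s]; exact this t ht s hs (le_of_not_ge hst)
  by_cases htb : t ≤ b
  · exact h₁.dist_le_mul s ⟨hs.1, hst.trans htb⟩ t ⟨ht.1, htb⟩
  by_cases hbs : b ≤ s
  · exact h₂.dist_le_mul s ⟨hbs, hs.2⟩ t ⟨hbs.trans hst, ht.2⟩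
  rw [not_le] at htb hbs
  calc dist (g s) (g t) ≤ dist (g s) (g b) + dist (g b) (g t) := dist_triangle _ _ _
    _ ≤ K * dist s b + K * dist b t :=
      add_le_add (h₁.dist_le_mul s ⟨hs.1, hbs.le⟩ b ⟨hs.1.trans hbs.le, le_rfl⟩)
        (h₂.dist_le_mul b ⟨le_rfl, htb.le.trans ht.2⟩ t ⟨htb.le, ht.2⟩)
    _ = K * dist s t := by
      rw [Real.dist_eq, Real.dist_eq, Real.dist_eq, abs_of_neg (by linarith),
        abs_of_neg (by linarith), abs_of_nonpos (by linarith)]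
      ring

section SegmentLift

variable [NormedSpace ℝ F]

open AffineMap

/-- The Lipschitz constant is the one forced on lifts by `c`-expansion of `f`. -/
def IsSegmentLiftOn (f : E → F) (c : ℝ≥0) (x₀ : E) (y : F) (a : ℝ) (W : ℝ → E) : Prop :=
  W 0 = x₀ ∧ (∀ t ∈ Icc 0 a, f (W t) = lineMap (f x₀) y t) ∧
    LipschitzOnWith (nndist (f x₀) y / c) W (Icc 0 a)

theorem IsSegmentLiftOn.extend {f : E → F} {c : ℝ≥0} {x₀ : E} {y : F} {ε a b : ℝ} {W : ℝ → E}
    (hc : 0 < c) (hW : IsSegmentLiftOn f c x₀ y a W) (ha : a ∈ Icc 0 1) (hab : a ≤ b)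
    (hba : (b - a) * dist (f x₀) y < c * ε)
    (hreg : ∀ z ∈ closedBall x₀ (dist (f x₀) y / c), CoversAndExpandsOnBall f c z ε) :
    ∃ W', IsSegmentLiftOn f c x₀ y b W' := by
  obtain ⟨hW0, hWf, hWlip⟩ := hW
  have hc' : (0 : ℝ) < c := hc
  have hε : 0 < ε := pos_of_mul_pos_right
    ((mul_nonneg (sub_nonneg.mpr hab) dist_nonneg).trans_lt hba) hc'.le
  have haI : a ∈ Icc 0 a := ⟨ha.1, le_rfl⟩
  have hz : W a ∈ closedBall x₀ (dist (f x₀) y / c) := by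
    have := hWlip.dist_le_mul a haI 0 ⟨le_rfl, ha.1⟩
    rw [hW0, NNReal.coe_div, coe_nndist, Real.dist_eq, sub_zero, abs_of_nonneg ha.1] at this
    exact mem_closedBall.mpr (this.trans (mul_le_of_le_one_right (by positivity) ha.2))
  obtain ⟨hcov, hexp⟩ := hreg (W a) hz
  have hpre : ∀ t, ∃ x, t ∈ Icc a b → x ∈ ball (W a) ε ∧ f x = lineMap (f x₀) y t := by
    intro t
    by_cases ht : t ∈ Icc a b
    · have hmem : lineMap (f x₀) y t ∈ ball (f (W a)) (c * ε) := by
        rw [mem_ball, hWf a haI, dist_lineMap_lineMap, Real.dist_eq,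
          abs_of_nonneg (by linarith [ht.1])]
        exact (mul_le_mul_of_nonneg_right (by linarith [ht.2]) dist_nonneg).trans_lt hba
      obtain ⟨x, hx, hfx⟩ := hcov hmem
      exact ⟨x, fun _ => ⟨hx, hfx⟩⟩
    · exact ⟨W a, fun h => absurd h ht⟩
  choose V hV using hpre
  set W' : ℝ → E := fun t => if t ≤ a then W t else V t
  have hW'W : ∀ t ∈ Icc 0 a, W' t = W t := fun t ht => if_pos ht.2
  have hW'V : ∀ t ∈ Icc a b, W' t ∈ ball (W a) ε ∧ f (W' t) = lineMap (f x₀) y t := by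
    intro t ht
    by_cases hta : t ≤ a
    · obtain rfl : t = a := le_antisymm hta ht.1
      rw [hW'W t haI]
      exact ⟨mem_ball_self hε, hWf t haI⟩
    · simp only [W', if_neg hta]
      exact hV t ht
  refine ⟨W', by rw [hW'W 0 ⟨le_rfl, ha.1⟩, hW0], fun t ht => ?_, ?_⟩
  · by_cases hta : t ≤ a
    · rw [hW'W t ⟨ht.1, hta⟩]; exact hWf t ⟨ht.1, hta⟩
    · exact (hW'V t ⟨le_of_not_ge hta, ht.2⟩).2
  refine LipschitzOnWith.Icc_union (b := a) (fun s hs t ht => ?_) ?_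
  · rw [hW'W s hs, hW'W t ht]; exact hWlip hs ht
  refine LipschitzOnWith.of_dist_le_mul fun s hs t ht => ?_
  have := hexp _ (hW'V s hs).1 _ (hW'V t ht).1
  rw [(hW'V s hs).2, (hW'V t ht).2, dist_lineMap_lineMap] at this
  rw [NNReal.coe_div, coe_nndist, div_mul_eq_mul_div, le_div_iff₀ hc']
  linarith

theorem exists_isSegmentLiftOn_one {f : E → F} {c : ℝ≥0} {x₀ : E} {y : F} {ε : ℝ} (hc : 0 < c)
    (hε : 0 < ε)
    (hreg : ∀ z ∈ closedBall x₀ (dist (f x₀) y / c), CoversAndExpandsOnBall f c z ε) :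
    ∃ W, IsSegmentLiftOn f c x₀ y 1 W := by
  set L := dist (f x₀) y
  set δ := c * ε / (L + 1)
  have hL : 0 ≤ L := dist_nonneg
  have hδ : 0 < δ := by positivity
  have hδL : δ * L < c * ε := by
    rw [div_mul_eq_mul_div, div_lt_iff₀ (by positivity)]
    nlinarith [mul_pos (NNReal.coe_pos.mpr hc) hε]
  have hsteps : ∀ k : ℕ, ∃ W, IsSegmentLiftOn f c x₀ y (min (k * δ) 1) W := by
    intro k
    induction k with
    | zero =>
      refine ⟨fun _ => x₀, rfl, fun t ht => ?_, ?_⟩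
      · obtain rfl : t = 0 := by simpa using ht
        exact (lineMap_apply_zero _ _).symm
      · exact (LipschitzWith.const x₀).lipschitzOnWith.weaken zero_le
    | succ k ih =>
      obtain ⟨W, hW⟩ := ih
      have hstep : min ((k + 1 : ℕ) * δ) 1 ≤ min (k * δ) 1 + δ := by
        rw [← min_add_add_right, Nat.cast_succ, add_mul, one_mul]
        exact min_le_min_left _ (by linarith)
      refine hW.extend hc ⟨by positivity, min_le_right _ _⟩
        (min_le_min_right _ (by gcongr; simp)) ?_ hreg
      exact (mul_le_mul_of_nonneg_right (by linarith) hL).trans_lt hδL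
  obtain ⟨k, hk⟩ := exists_nat_ge (1 / δ)
  obtain ⟨W, hW⟩ := hsteps k
  rw [min_eq_right ((div_le_iff₀ hδ).mp hk)] at hW
  exact ⟨W, hW⟩

theorem IsSegmentLiftOn.apply_one {f : E → F} {c : ℝ≥0} {x₀ : E} {y : F} {W : ℝ → E}
    (hW : IsSegmentLiftOn f c x₀ y 1 W) :
    f (W 1) = y ∧ c * dist (W 1) x₀ ≤ dist (f x₀) y := by
  obtain ⟨hW0, hWf, hWlip⟩ := hW
  refine ⟨(hWf 1 ⟨zero_le_one, le_rfl⟩).trans (lineMap_apply_one _ _), ?_⟩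
  have := hWlip.dist_le_mul 1 ⟨zero_le_one, le_rfl⟩ 0 ⟨le_rfl, zero_le_one⟩
  rw [hW0, NNReal.coe_div, coe_nndist, Real.dist_eq, sub_zero, abs_one, mul_one] at this
  rcases eq_or_lt_of_le c.coe_nonneg with hc | hc
  · rw [← hc, zero_mul]; exact dist_nonneg
  · exact (le_div_iff₀' hc).mp this

theorem exists_isSegmentLiftOn_one_of_coversNear [ProperSpace E] {f : E → F} {c : ℝ≥0}
    (hc : 0 < c) (hcov : ∀ xb, CoversNear f c xb) (hexp : ∀ xb, IsInjConstAround f xb c)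
    (x₀ : E) (y : F) : ∃ W, IsSegmentLiftOn f c x₀ y 1 W := by
  obtain ⟨ε, hε, hreg⟩ :=
    (isCompact_closedBall x₀ _).exists_forall_coversAndExpandsOnBall hcov hexp
  exact exists_isSegmentLiftOn_one hc hε hreg

theorem surjective_of_coversNear [ProperSpace E] {f : E → F} {c : ℝ≥0} (hc : 0 < c)
    (hcov : ∀ xb, CoversNear f c xb) (hexp : ∀ xb, IsInjConstAround f xb c) :
    Function.Surjective f := fun y => by
  obtain ⟨W, hW⟩ := exists_isSegmentLiftOn_one_of_coversNear hc hcov hexp 0 y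
  exact ⟨W 1, hW.apply_one.1⟩

end SegmentLift

section Global

variable [NormedSpace ℝ E] [NormedSpace ℝ F]

open AffineMap unitInterval

/-- Lifting the segments from `f (p t)` to `f a` along the segment `p` from `a` to `b` gives a
continuous family of lifts; their endpoints form a path in the discrete fibre over `f a`,
which therefore joins `a` to `b` only if `a = b`. -/
theorem injective_of_forall_exists_lift {f : E → F} (hf : IsLocalHomeomorph f)
    (hlift : ∀ x y, ∃ W : C(I, E), W 0 = x ∧ ∀ s : I, f (W s) = lineMap (f x) y (s : ℝ)) :
    Function.Injective f := by
  choose W hW0 hWf using hlift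
  have hsep : IsSeparatedMap f := T2Space.isSeparatedMap f
  have hfix : ∀ x, W x (f x) 1 = x := fun x => congr_fun
    (hsep.eq_of_comp_eq hf.isLocallyInjective (W x (f x)).continuous continuous_const
      (funext fun s => by simp [hWf]) 0 (hW0 x (f x))) 1
  intro a b hab
  set p : I → E := fun t => lineMap a b (t : ℝ)
  have hp : Continuous p := by fun_prop
  let Φ : C(I × I, F) := ⟨fun st => lineMap (f (p st.2)) (f a) (st.1 : ℝ),
    ((hf.continuous.comp hp).comp continuous_snd).lineMap continuous_const
      (continuous_subtype_val.comp continuous_fst)⟩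
  have hcont : Continuous fun st : I × I => W (p st.2) (f a) st.1 :=
    hf.continuous_lift hsep Φ (funext fun st => hWf _ _ _) (by simpa only [hW0] using hp)
      fun t => (W (p t) (f a)).continuous
  have hend := hsep.const_of_comp hf.isLocallyInjective (hcont.comp (Continuous.prodMk_right 1))
    (fun t t' => by simp [hWf]) 0 1
  simp only [Function.comp_apply, p, Icc.coe_zero, Icc.coe_one, lineMap_apply_zero,
    lineMap_apply_one] at hend
  rwa [hfix, hab, hfix] at hend

variable [ProperSpace E] {f : E → F} {c : ℝ≥0}

theorem injective_of_coversNear (hf : Continuous f) (hc : 0 < c)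
    (hcov : ∀ xb, CoversNear f c xb) (hexp : ∀ xb, IsInjConstAround f xb c) :
    Function.Injective f := by
  refine injective_of_forall_exists_lift
    (isLocalHomeomorph_of_coversNear hf (by exact_mod_cast hc) hcov hexp) fun x y => ?_
  obtain ⟨W, hW0, hWf, hWlip⟩ := exists_isSegmentLiftOn_one_of_coversNear hc hcov hexp x y
  exact ⟨⟨fun s => W s, hWlip.continuousOn.comp_continuous continuous_subtype_val Subtype.prop⟩,
    hW0, fun s => hWf s s.2⟩

theorem mul_dist_le_dist_of_coversNear (hf : Continuous f) (hc : 0 < c)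
    (hcov : ∀ xb, CoversNear f c xb) (hexp : ∀ xb, IsInjConstAround f xb c) (x₁ x₂ : E) :
    c * dist x₁ x₂ ≤ dist (f x₁) (f x₂) := by
  obtain ⟨W, hW⟩ := exists_isSegmentLiftOn_one_of_coversNear hc hcov hexp x₂ (f x₁)
  obtain ⟨hfW, hdist⟩ := hW.apply_one
  rwa [injective_of_coversNear hf hc hcov hexp hfW, dist_comm (f x₂)] at hdist

end Global

theorem ENNReal.coe_le_inv_mul_of_forall_lt {a b : ℝ≥0} {D : ℝ≥0∞} (hD : 0 < D)
    (h : ∀ c : ℝ≥0, 0 < c → (c : ℝ≥0∞) < D → c * a ≤ b) : (a : ℝ≥0∞) ≤ D⁻¹ * b := by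
  rcases eq_or_ne a 0 with rfl | ha
  · simp
  have ha' : (a : ℝ≥0∞) ≠ 0 := by exact_mod_cast ha
  have hDle : D ≤ b / a := ENNReal.le_of_forall_pos_nnreal_lt fun r hr hrD =>
    (ENNReal.le_div_iff_mul_le (Or.inl ha') (Or.inl ENNReal.coe_ne_top)).mpr
      (by exact_mod_cast h r hr hrD)
  rw [← ENNReal.div_eq_inv_mul,
    ENNReal.le_div_iff_mul_le (Or.inl hD.ne') (Or.inr ENNReal.coe_ne_top)]
  calc (a : ℝ≥0∞) * D ≤ a * (b / a) := by gcongr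
    _ = b := ENNReal.mul_div_cancel ha' ENNReal.coe_ne_top

/-- Global inversion via strict estimators (Proposition on global invertibility):
if `f` is continuous, admits at each `x` a strict `η_x`-estimator `g_x` with
`inj(g_x, x) > η_x`, and admits at each `x` a strict `μ`-estimator `h x` with
`σ = inf_x lop(h x, x) > μ`, then `f` is a bijection of `ℝⁿ` whose inverse is
Lipschitz with constant `(σ - μ)⁻¹`. -/
theorem stmt5 (n : ℕ) (f : EuclideanSpace ℝ (Fin n) → EuclideanSpace ℝ (Fin n))
    (μ : ℝ≥0)
    (hcont : Continuous f)
    (hinj : ∀ x : EuclideanSpace ℝ (Fin n), ∃ η : ℝ≥0,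
      ∃ g : EuclideanSpace ℝ (Fin n) → EuclideanSpace ℝ (Fin n),
        IsStrictEstimator f g x η ∧ (η : ℝ≥0∞) < injBound g x)
    (h : EuclideanSpace ℝ (Fin n) →
          EuclideanSpace ℝ (Fin n) → EuclideanSpace ℝ (Fin n))
    (hest : ∀ x, IsStrictEstimator f (h x) x μ)
    (hσ : (μ : ℝ≥0∞) < ⨅ x, lopBound (h x) x) :
    Function.Bijective f ∧
    ∃ g : EuclideanSpace ℝ (Fin n) → EuclideanSpace ℝ (Fin n),
      (∀ x, g (f x) = x) ∧ (∀ y, f (g y) = y) ∧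
      ∀ y₁ y₂, (‖g y₁ - g y₂‖₊ : ℝ≥0∞) ≤
        ((⨅ x, lopBound (h x) x) - (μ : ℝ≥0∞))⁻¹ * (‖y₁ - y₂‖₊ : ℝ≥0∞) := by
  set σ := ⨅ x, lopBound (h x) x
  have hcov : ∀ c : ℝ≥0, 0 < c → (c : ℝ≥0∞) < σ - μ → ∀ xb, CoversNear f c xb :=
    fun c hc hcσ xb => coversNear_of_lipBound_sub_add_lt_lopBound hcont hc <|
      (add_le_add (hest xb).2 le_rfl).trans_lt ((lt_tsub_iff_left.mp hcσ).trans_le (iInf_le _ xb))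
  have hexp : ∀ c : ℝ≥0, 0 < c → (c : ℝ≥0∞) < σ - μ → ∀ xb, IsInjConstAround f xb c := by
    intro c hc hcσ xb
    obtain ⟨η, g, ⟨-, hlip⟩, hη⟩ := hinj xb
    obtain ⟨U, hU, hinjU⟩ := exists_injOn_of_lipBound_sub_lt_injBound (hlip.trans_lt hη)
    exact (hcov c hc hcσ xb).isInjConstAround hU hinjU
  obtain ⟨c₀, hc₀, hc₀σ⟩ := ENNReal.lt_iff_exists_nnreal_btwn.mp (tsub_pos_of_lt hσ)
  have hc₀' : 0 < c₀ := by exact_mod_cast hc₀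
  have hbij : Function.Bijective f :=
    ⟨injective_of_coversNear hcont hc₀' (hcov c₀ hc₀' hc₀σ) (hexp c₀ hc₀' hc₀σ),
      surjective_of_coversNear hc₀' (hcov c₀ hc₀' hc₀σ) (hexp c₀ hc₀' hc₀σ)⟩
  obtain ⟨g, hgf, hfg⟩ := Function.bijective_iff_has_inverse.mp hbij
  refine ⟨hbij, g, hgf, hfg, fun y₁ y₂ =>
    ENNReal.coe_le_inv_mul_of_forall_lt (tsub_pos_of_lt hσ) fun c hc hcσ => ?_⟩
  have := mul_dist_le_dist_of_coversNear hcont hc (hcov c hc hcσ) (hexp c hc hcσ) (g y₁) (g y₂)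
  rw [hfg, hfg, dist_eq_norm, dist_eq_norm] at this
  exact_mod_cast this
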